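/- Let β ≥ 1 and B = B(c_B, r_B) ⊂ R^n with r_B ≤ β·m(c_B), and assume inf_{y ∈ B̄}|y| ≥ √β. Then the Gaussian tent T_γ^{α,β}(B) is contained in D_{α,β} ∪ ({c_B} × (0,∞)), where D_{α,β} = {(y,t) ∈ R^{n+1}_+ : αt < β·m(y)}. -/

import Mathlib

open MeasureTheory Metric Set ENNReal

noncomputable def mCut {n : ℕ} (x : EuclideanSpace ℝ (Fin n)) : ℝ :=
  if ‖x‖ ≤ 1 then 1 else 1 / ‖x‖

noncomputable def gaussM (n : ℕ) : Measure (EuclideanSpace ℝ (Fin n)) :=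
  volume.withDensity fun y => ENNReal.ofReal (Real.exp (-‖y‖ ^ 2))

noncomputable def dtt : Measure ℝ :=
  (volume.restrict (Set.Ioi (0 : ℝ))).withDensity fun t => ENNReal.ofReal (1 / t)

noncomputable def tentMeasure (n : ℕ) : Measure (EuclideanSpace ℝ (Fin n) × ℝ) :=
  (gaussM n).prod dtt

def gaussCone {n : ℕ} (α β : ℝ) (x : EuclideanSpace ℝ (Fin n)) :
    Set (EuclideanSpace ℝ (Fin n) × ℝ) :=
  {p | 0 < p.2 ∧ dist p.1 x < min (α * p.2) (β * mCut p.1)}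

def gaussTent {n : ℕ} (α β : ℝ) (B : Set (EuclideanSpace ℝ (Fin n))) :
    Set (EuclideanSpace ℝ (Fin n) × ℝ) :=
  {p | 0 < p.2 ∧ min (α * p.2) (β * mCut p.1) ≤ Metric.infDist p.1 Bᶜ}

noncomputable def areaS {n : ℕ} (q α β : ℝ) (f : EuclideanSpace ℝ (Fin n) × ℝ → ℝ)
    (x : EuclideanSpace ℝ (Fin n)) : ℝ≥0∞ :=
  (∫⁻ p in gaussCone α β x,
      ENNReal.ofReal (|f p| ^ q) /
        gaussM n (Metric.ball p.1 (min (α * p.2) (β * mCut p.1))) ∂ tentMeasure n) ^ (1 / q)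

noncomputable def areaSInf {n : ℕ} (α β : ℝ) (f : EuclideanSpace ℝ (Fin n) × ℝ → ℝ)
    (x : EuclideanSpace ℝ (Fin n)) : ℝ≥0∞ :=
  ⨆ p ∈ gaussCone α β x, ENNReal.ofReal |f p|

lemma mCut_pos {n : ℕ} (x : EuclideanSpace ℝ (Fin n)) : 0 < mCut x := by
  unfold mCut
  split
  · norm_num
  · rename_i h
    exact one_div_pos.mpr (lt_trans one_pos (lt_of_not_ge h))

lemma mCut_eq_inv {n : ℕ} (x : EuclideanSpace ℝ (Fin n)) (h : 1 ≤ ‖x‖) :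
    mCut x = 1 / ‖x‖ := by
  unfold mCut
  split
  · have : ‖x‖ = 1 := le_antisymm ‹_› h
    rw [this]; norm_num
  · rfl

theorem stmt4 {n : ℕ} (α β : ℝ) (hα : 0 < α) (hβ : 1 ≤ β)
    (c : EuclideanSpace ℝ (Fin n)) (r : ℝ) (hr : 0 < r) (hadm : r ≤ β * mCut c)
    (hq : ∀ y ∈ Metric.closedBall c r, Real.sqrt β ≤ ‖y‖) :
    gaussTent α β (Metric.ball c r) ⊆
      {p : EuclideanSpace ℝ (Fin n) × ℝ | 0 < p.2 ∧ α * p.2 < β * mCut p.1}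
        ∪ {p : EuclideanSpace ℝ (Fin n) × ℝ | p.1 = c ∧ 0 < p.2} := by
  rintro ⟨y, t⟩ ⟨ht, hmin⟩
  by_cases hlt : α * t < β * mCut y
  · exact Or.inl ⟨ht, hlt⟩
  push_neg at hlt
  right
  refine ⟨?_, ht⟩
  -- now β * mCut y ≤ infDist y (ball c r)ᶜ
  have hkey : β * mCut y ≤ Metric.infDist y (Metric.ball c r)ᶜ := by
    rw [min_eq_right hlt] at hmin; exact hmin
  have hβ0 : 0 < β := lt_of_lt_of_le one_pos hβ
  have hmy : 0 < β * mCut y := mul_pos hβ0 (mCut_pos y)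
  -- y ∈ ball c r
  have hyB : y ∈ Metric.ball c r := by
    by_contra hy
    have : Metric.infDist y (Metric.ball c r)ᶜ = 0 :=
      Metric.infDist_zero_of_mem hy
    rw [this] at hkey
    linarith
  by_contra hne
  set d := dist y c with hd
  have hdpos : 0 < d := dist_pos.mpr hne
  have hdr : d < r := Metric.mem_ball.mp hyB
  -- point on the sphere
  have hzy : Metric.infDist y (Metric.ball c r)ᶜ ≤ r - d := by
    set z : EuclideanSpace ℝ (Fin n) := c + (r / d) • (y - c) with hz
    have hzc : dist z c = r := by
      rw [hz, dist_eq_norm]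
      simp only [add_sub_cancel_left, norm_smul]
      rw [Real.norm_eq_abs, abs_of_pos (div_pos hr hdpos)]
      have : ‖y - c‖ = d := by rw [hd, dist_eq_norm]
      rw [this]
      field_simp
    have hznB : z ∈ (Metric.ball c r)ᶜ := by
      simp [Metric.mem_ball, hzc]
    have : dist y z = r - d := by
      rw [dist_eq_norm, hz]
      have : y - (c + (r / d) • (y - c)) = (1 - r / d) • (y - c) := by
        module
      rw [this, norm_smul, Real.norm_eq_abs]
      have hnyc : ‖y - c‖ = d := by rw [hd, dist_eq_norm]
      rw [hnyc, abs_of_nonpos (by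
        rw [sub_nonpos]
        exact (one_le_div hdpos).mpr hdr.le)]
      field_simp
      ring
    calc Metric.infDist y (Metric.ball c r)ᶜ ≤ dist y z :=
          Metric.infDist_le_dist_of_mem hznB
      _ = r - d := this
  -- norms
  set s := Real.sqrt β with hs
  have hs1 : 1 ≤ s := by
    rw [hs, show (1:ℝ) = Real.sqrt 1 by simp]
    exact Real.sqrt_le_sqrt hβ
  have hss : s * s = β := Real.mul_self_sqrt hβ0.le
  have hyc : s ≤ ‖y‖ := hq y (Metric.ball_subset_closedBall hyB)
  have hcc : s ≤ ‖c‖ := hq c (Metric.mem_closedBall_self hr.le)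
  have hy1 : (1:ℝ) ≤ ‖y‖ := le_trans hs1 hyc
  have hc1 : (1:ℝ) ≤ ‖c‖ := le_trans hs1 hcc
  have hypos : (0:ℝ) < ‖y‖ := lt_of_lt_of_le one_pos hy1
  have hcpos : (0:ℝ) < ‖c‖ := lt_of_lt_of_le one_pos hc1
  rw [mCut_eq_inv y hy1] at hkey hlt
  rw [mCut_eq_inv c hc1] at hadm
  -- β/‖y‖ + d ≤ r ≤ β/‖c‖, with a - b ≤ d
  have h1 : β * (1 / ‖y‖) + d ≤ β * (1 / ‖c‖) := by linarith [le_trans hkey hzy]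
  have h2 : ‖y‖ - ‖c‖ ≤ d := by
    have := norm_sub_norm_le y c
    rw [← dist_eq_norm] at this
    linarith
  have h3 : β * ‖c‖ + d * (‖y‖ * ‖c‖) ≤ β * ‖y‖ := by
    have := mul_le_mul_of_nonneg_right h1 (mul_pos hypos hcpos).le
    calc β * ‖c‖ + d * (‖y‖ * ‖c‖)
        = (β * (1 / ‖y‖) + d) * (‖y‖ * ‖c‖) := by field_simp
      _ ≤ (β * (1 / ‖c‖)) * (‖y‖ * ‖c‖) := this
      _ = β * ‖y‖ := by field_simp
  have hspos : (0:ℝ) < s := lt_of_lt_of_le one_pos hs1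
  have h4 : d * (‖y‖ * ‖c‖) ≤ β * d := by
    have := mul_le_mul_of_nonneg_left h2 hβ0.le
    linarith
  have h5 : ‖y‖ * ‖c‖ ≤ β :=
    le_of_mul_le_mul_left (by linarith : d * (‖y‖ * ‖c‖) ≤ d * β) hdpos
  have h6 : β ≤ ‖y‖ * ‖c‖ := by
    nlinarith [mul_le_mul hyc hcc hspos.le hypos.le]
  have hab : ‖y‖ * ‖c‖ = β := le_antisymm h5 h6
  have ha : ‖y‖ = s := by
    refine le_antisymm ?_ hyc
    nlinarith [mul_le_mul_of_nonneg_left hcc hypos.le]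
  have hb : ‖c‖ = s := by
    refine le_antisymm ?_ hcc
    nlinarith [mul_le_mul_of_nonneg_left hyc hcpos.le]
  rw [ha, hb] at h3
  nlinarith [mul_pos hdpos hβ0]
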